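/- Let Ψ be a real symmetric positive semidefinite m×m matrix and ρ, β ≥ 0 reals, and define the penalizer ψ(S) = −(ρ/2) log det(S) − (β/2) tr(Ψ S^{−1}) on symmetric positive definite m×m matrices. Then ψ is geodesically midpoint-concave: for all symmetric positive definite S, R ∈ ℝ^{m×m}, ψ(S # R) ≥ ½ ψ(S) + ½ ψ(R). -/

import Mathlib

open Matrix Real
open scoped Classical

/-- The unique symmetric positive semidefinite square root of a positive semidefinite
matrix (junk value `0` if the matrix is not positive semidefinite). -/
noncomputable def psqrt {m : ℕ} (M : Matrix (Fin m) (Fin m) ℝ) : Matrix (Fin m) (Fin m) ℝ :=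
  if h : M.PosSemidef then
    (h.1.eigenvectorUnitary : Matrix (Fin m) (Fin m) ℝ) *
      diagonal ((↑) ∘ (√·) ∘ h.1.eigenvalues) *
      (star h.1.eigenvectorUnitary : Matrix (Fin m) (Fin m) ℝ)
  else 0

/-- The geometric mean `S # R = S^{1/2} (S^{-1/2} R S^{-1/2})^{1/2} S^{1/2}` of two
positive definite matrices: the midpoint of the geodesic joining them in the
affine-invariant Riemannian metric. -/
noncomputable def geoMean {m : ℕ} (S R : Matrix (Fin m) (Fin m) ℝ) :
    Matrix (Fin m) (Fin m) ℝ :=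
  psqrt S * psqrt ((psqrt S)⁻¹ * R * (psqrt S)⁻¹) * psqrt S

/-!
Write `S = s²` with `s = S^{1/2}` and `t = (s⁻¹ R s⁻¹)^{1/2}`, so that `R = s t² s` and
`S # R = s t s` with `s`, `t` symmetric. Then `det (S # R)² = det S · det R`, so the log-det
term of `ψ` is exactly affine at the midpoint, and
`S⁻¹ + R⁻¹ - 2 (S # R)⁻¹ = s⁻¹ (1 - t⁻¹)² s⁻¹` is positive semidefinite; pairing it with
`Ψ ⪰ 0` under the trace gives the inequality for the trace term.
-/

section

open scoped MatrixOrder ComplexOrder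

variable {n 𝕜 : Type*} [Fintype n] [RCLike 𝕜]

theorem Matrix.PosSemidef.trace_mul_nonneg {A B : Matrix n n 𝕜} (hA : A.PosSemidef)
    (hB : B.PosSemidef) : 0 ≤ (A * B).trace := by
  obtain ⟨y, rfl⟩ := CStarAlgebra.nonneg_iff_eq_star_mul_self.mp hB.nonneg
  rw [← mul_assoc, trace_mul_comm, star_eq_conjTranspose, ← mul_assoc]
  exact (hA.mul_mul_conjTranspose_same y).trace_nonneg

theorem Matrix.IsHermitian.posSemidef_inv_add_inv_sub_two_smul_inv [DecidableEq n]
    {s t : Matrix n n 𝕜} (hs : s.IsHermitian) (ht : t.IsHermitian) :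
    ((s * s)⁻¹ + (s * t * t * s)⁻¹ - 2 • (s * t * s)⁻¹).PosSemidef := by
  have h_square : (s * s)⁻¹ + (s * t * t * s)⁻¹ - 2 • (s * t * s)⁻¹ =
      (s⁻¹)ᴴ * ((1 - t⁻¹)ᴴ * (1 - t⁻¹)) * s⁻¹ := by
    -- `Matrix.mul_inv_rev` is unconditional, so this is a ring identity in `s⁻¹` and `t⁻¹`.
    simp only [mul_inv_rev, conjTranspose_sub, conjTranspose_one, hs.inv.eq, ht.inv.eq]
    noncomm_ring
  rw [h_square]
  exact (posSemidef_conjTranspose_mul_self _).conjTranspose_mul_mul_same _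

end

section

variable {m : ℕ}

lemma psqrt_posSemidef {M : Matrix (Fin m) (Fin m) ℝ} (h : M.PosSemidef) :
    (psqrt M).PosSemidef := by
  rw [psqrt, dif_pos h]
  refine PosSemidef.mul_mul_conjTranspose_same (PosSemidef.diagonal fun i => ?_) _
  simp [Real.sqrt_nonneg]

lemma psqrt_mul_self {M : Matrix (Fin m) (Fin m) ℝ} (h : M.PosSemidef) :
    psqrt M * psqrt M = M := by
  rw [psqrt, dif_pos h]
  conv_rhs => rw [h.1.spectral_theorem, Unitary.conjStarAlgAut_apply]
  have hU := Unitary.coe_star_mul_self h.1.eigenvectorUnitary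
  set U : Matrix (Fin m) (Fin m) ℝ := (h.1.eigenvectorUnitary : Matrix (Fin m) (Fin m) ℝ)
  calc U * diagonal ((↑) ∘ (√·) ∘ h.1.eigenvalues) * star U *
        (U * diagonal ((↑) ∘ (√·) ∘ h.1.eigenvalues) * star U)
      = U * (diagonal ((↑) ∘ (√·) ∘ h.1.eigenvalues) * (star U * U) *
        diagonal ((↑) ∘ (√·) ∘ h.1.eigenvalues)) * star U := by simp only [mul_assoc]
    _ = _ := by
      rw [hU, mul_one, diagonal_mul_diagonal]
      congr 3; funext i
      simp [Real.mul_self_sqrt (h.eigenvalues_nonneg i)]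

lemma psqrt_posDef {M : Matrix (Fin m) (Fin m) ℝ} (h : M.PosDef) : (psqrt M).PosDef := by
  have hdet : (psqrt M).det * (psqrt M).det = M.det := by
    rw [← det_mul, psqrt_mul_self h.posSemidef]
  refine (psqrt_posSemidef h.posSemidef).posDef_iff_det_ne_zero.mpr fun h0 => ?_
  rw [h0, zero_mul] at hdet
  exact h.det_pos.ne' hdet.symm

lemma exists_geoMean_factorization {S R : Matrix (Fin m) (Fin m) ℝ} (hS : S.PosDef)
    (hR : R.PosSemidef) :
    ∃ s t : Matrix (Fin m) (Fin m) ℝ, s.IsHermitian ∧ t.IsHermitian ∧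
      S = s * s ∧ R = s * t * t * s ∧ geoMean S R = s * t * s := by
  set s := psqrt S
  have hs : s.IsHermitian := (psqrt_posSemidef hS.posSemidef).1
  have hT : (s⁻¹ * R * s⁻¹).PosSemidef := by
    simpa only [hs.inv.eq] using hR.conjTranspose_mul_mul_same s⁻¹
  refine ⟨s, psqrt (s⁻¹ * R * s⁻¹), hs, (psqrt_posSemidef hT).1,
    (psqrt_mul_self hS.posSemidef).symm, ?_, rfl⟩
  have hsu : IsUnit s.det := isUnit_iff_ne_zero.mpr (psqrt_posDef hS).det_pos.ne'
  rw [mul_assoc s, psqrt_mul_self hT, ← mul_assoc, ← mul_assoc, mul_nonsing_inv _ hsu, one_mul,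
    mul_assoc, nonsing_inv_mul _ hsu, mul_one]

lemma det_geoMean_mul_self {S R : Matrix (Fin m) (Fin m) ℝ} (hS : S.PosDef)
    (hR : R.PosSemidef) : (geoMean S R).det * (geoMean S R).det = S.det * R.det := by
  obtain ⟨s, t, -, -, rfl, rfl, hG⟩ := exists_geoMean_factorization hS hR
  simp only [hG, det_mul]
  ring

lemma log_det_geoMean {S R : Matrix (Fin m) (Fin m) ℝ} (hS : S.PosDef) (hR : R.PosDef) :
    Real.log (geoMean S R).det = (Real.log S.det + Real.log R.det) / 2 := by
  have hdet := det_geoMean_mul_self hS hR.posSemidef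
  have hSR : S.det * R.det ≠ 0 := (mul_pos hS.det_pos hR.det_pos).ne'
  have hG : (geoMean S R).det ≠ 0 := fun h => hSR (by rw [← hdet, h, zero_mul])
  rw [← Real.log_mul hS.det_pos.ne' hR.det_pos.ne', ← hdet, Real.log_mul hG hG]
  ring

lemma two_mul_trace_mul_inv_geoMean_le {Ψ S R : Matrix (Fin m) (Fin m) ℝ} (hΨ : Ψ.PosSemidef)
    (hS : S.PosDef) (hR : R.PosSemidef) :
    2 * (Ψ * (geoMean S R)⁻¹).trace ≤ (Ψ * S⁻¹).trace + (Ψ * R⁻¹).trace := by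
  obtain ⟨s, t, hs, ht, rfl, rfl, hG⟩ := exists_geoMean_factorization hS hR
  have := hΨ.trace_mul_nonneg (hs.posSemidef_inv_add_inv_sub_two_smul_inv ht)
  rw [← hG, mul_sub, mul_add, mul_smul_comm, trace_sub, trace_add, trace_smul, two_nsmul] at this
  linarith

end

theorem penalizer_geodesically_midpoint_concave_general {m : ℕ}
    (Ψ : Matrix (Fin m) (Fin m) ℝ) (hΨ : Ψ.PosSemidef) (ρ β : ℝ) (hβ : 0 ≤ β)
    (S R : Matrix (Fin m) (Fin m) ℝ) (hS : S.PosDef) (hR : R.PosDef) :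
    (1/2) * (-(ρ/2) * Real.log S.det - β/2 * (Ψ * S⁻¹).trace)
      + (1/2) * (-(ρ/2) * Real.log R.det - β/2 * (Ψ * R⁻¹).trace)
      ≤ -(ρ/2) * Real.log (geoMean S R).det - β/2 * (Ψ * (geoMean S R)⁻¹).trace := by
  have htrace := mul_le_mul_of_nonneg_left
    (two_mul_trace_mul_inv_geoMean_le hΨ hS hR.posSemidef) hβ
  rw [log_det_geoMean hS hR]
  linarith

/-- the penalizer `ψ(S) = -(ρ/2) log det S - (β/2) tr(Ψ S⁻¹)` is
geodesically midpoint-concave on the positive definite matrices. -/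
theorem penalizer_geodesically_midpoint_concave {m : ℕ}
    (Ψ : Matrix (Fin m) (Fin m) ℝ) (hΨ : Ψ.PosSemidef) (ρ β : ℝ) (hρ : 0 ≤ ρ) (hβ : 0 ≤ β)
    (S R : Matrix (Fin m) (Fin m) ℝ) (hS : S.PosDef) (hR : R.PosDef) :
    (1/2) * (-(ρ/2) * Real.log S.det - β/2 * (Ψ * S⁻¹).trace)
      + (1/2) * (-(ρ/2) * Real.log R.det - β/2 * (Ψ * R⁻¹).trace)
      ≤ -(ρ/2) * Real.log (geoMean S R).det - β/2 * (Ψ * (geoMean S R)⁻¹).trace :=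
  penalizer_geodesically_midpoint_concave_general Ψ hΨ ρ β hβ S R hS hR
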